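/- (Correctness of NQUEENS.) The least Herbrand model M of the program NQUEENS is contained in the specification S = S_pq ∪ S_pqs; that is, NQUEENS is correct with respect to S. -/
import Mathlib


/-- Ground terms of the n-queens program. -/
inductive Term : Type where
  | zero : Term
  | succ : Term → Term
  | nil  : Term
  | cons : Term → Term → Term

/-- The numeral `⌜n⌝`: `succ` applied `n` times to `zero`. -/
def numeral : ℕ → Term
  | 0 => Term.zero
  | n + 1 => Term.succ (numeral n)

/-- `NthMember k e t`: `e` is the `k`-th member (`k ≥ 1`) of the term `t`. -/
inductive NthMember : ℕ → Term → Term → Prop where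
  | head (e t' : Term) : NthMember 1 e (Term.cons e t')
  | tail {k : ℕ} {e t' : Term} (e₁ : Term) :
      NthMember k e t' → NthMember (k + 1) e (Term.cons e₁ t')

/-- `e` is a member of `t`. -/
def IsMember (e t : Term) : Prop := ∃ k : ℕ, 1 ≤ k ∧ NthMember k e t

/-- `t` is a list of length `n`. -/
inductive ListOfLength : ℕ → Term → Prop where
  | nil : ListOfLength 0 Term.nil
  | cons {n : ℕ} {t : Term} (e : Term) :
      ListOfLength n t → ListOfLength (n + 1) (Term.cons e t)

/-- `t` is a list (of some length). -/
def IsList (t : Term) : Prop := ∃ n : ℕ, ListOfLength n t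

/-- `t` is a list of pairwise distinct members. -/
def DistinctList (t : Term) : Prop :=
  IsList t ∧
  ∀ (k k' : ℕ) (e e' : Term),
    NthMember k e t → NthMember k' e' t → k ≠ k' → e ≠ e'

/-- The triple `(cs, us, ds)` is correct up to `m` w.r.t. `i`
(`0 ≤ m ≤ i`).  The up-diagonal number of queen `j` sitting at the `k`-th
column is the integer `k + j - i`, the down-diagonal number is `k + i - j`. -/
def CorrectUpTo (m i : ℕ) (cs us ds : Term) : Prop :=
  m ≤ i ∧
  DistinctList cs ∧
  (∀ j : ℕ, 1 ≤ j → j ≤ m → IsMember (numeral j) cs) ∧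
  -- the up-diagonal numbers of 1,…,m are pairwise distinct
  (∀ j j' k k' : ℕ, 1 ≤ j → j ≤ m → 1 ≤ j' → j' ≤ m → j ≠ j' →
    NthMember k (numeral j) cs → NthMember k' (numeral j') cs →
    (k : ℤ) + j - i ≠ (k' : ℤ) + j' - i) ∧
  -- the down-diagonal numbers of 1,…,m are pairwise distinct
  (∀ j j' k k' : ℕ, 1 ≤ j → j ≤ m → 1 ≤ j' → j' ≤ m → j ≠ j' →
    NthMember k (numeral j) cs → NthMember k' (numeral j') cs →
    (k : ℤ) + i - j ≠ (k' : ℤ) + i - j') ∧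
  -- positive up-diagonal numbers are recorded in us
  (∀ j k l : ℕ, 1 ≤ j → j ≤ m → NthMember k (numeral j) cs →
    (l : ℤ) = (k : ℤ) + j - i → 0 < l → NthMember l (numeral j) us) ∧
  -- positive down-diagonal numbers are recorded in ds
  (∀ j k l : ℕ, 1 ≤ j → j ≤ m → NthMember k (numeral j) cs →
    (l : ℤ) = (k : ℤ) + i - j → 0 < l → NthMember l (numeral j) ds)

/-- Ground atoms. -/
inductive Atom : Type where
  | pq  : Term → Term → Term → Term → Atom
  | pqs : Term → Term → Term → Term → Atom

/-- `S` is an (Herbrand) model of the ground definite program `P`: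
for every clause `(H, B) ∈ P` whose body atoms all lie in `S`, also `H ∈ S`. -/
def IsModel {A : Type} (P : Set (A × List A)) (S : Set A) : Prop :=
  ∀ (H : A) (B : List A), (H, B) ∈ P → (∀ b ∈ B, b ∈ S) → H ∈ S

/-- The least Herbrand model of `P` (the least set of atoms closed
under all the clauses of `P`). -/
def LeastModel {A : Type} (P : Set (A × List A)) : Set A :=
  ⋂₀ { S : Set A | IsModel P S }

/-- The ground instances of the four clauses of the program NQUEENS. -/
inductive NQClause : Atom × List Atom → Prop where
  | c1 (x y z : Term) :
      NQClause (Atom.pqs Term.zero x y z, [])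
  | c2 (i cs us ds u d : Term) :
      NQClause (Atom.pqs (Term.succ i) cs us (Term.cons d ds),
        [Atom.pqs i cs (Term.cons u us) ds, Atom.pq (Term.succ i) cs us ds])
  | c3 (i c u d : Term) :
      NQClause (Atom.pq i (Term.cons i c) (Term.cons i u) (Term.cons i d), [])
  | c4 (i cs us ds c u d : Term) :
      NQClause (Atom.pq i (Term.cons c cs) (Term.cons u us) (Term.cons d ds),
        [Atom.pq i cs us ds])

/-- The program NQUEENS as a set of ground clauses. -/
def NQUEENS : Set (Atom × List Atom) := { cl | NQClause cl }

/-- The ground instances of the two clauses defining `pq`. -/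
inductive PQClause : Atom × List Atom → Prop where
  | c3 (i c u d : Term) :
      PQClause (Atom.pq i (Term.cons i c) (Term.cons i u) (Term.cons i d), [])
  | c4 (i cs us ds c u d : Term) :
      PQClause (Atom.pq i (Term.cons c cs) (Term.cons u us) (Term.cons d ds),
        [Atom.pq i cs us ds])

/-- The program defining `pq`, as a set of ground clauses. -/
def PQprog : Set (Atom × List Atom) := { cl | PQClause cl }

/-- The specification `S_pq`. -/
def SpecPq : Set Atom :=
  { a | ∃ (i cs us ds : Term) (k : ℕ), 1 ≤ k ∧ a = Atom.pq i cs us ds ∧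
        NthMember k i cs ∧ NthMember k i us ∧ NthMember k i ds }

/-- The specification `S_pqs` (for correctness). -/
def SpecPqs : Set Atom :=
  { a | ∃ cs us ds : Term, a = Atom.pqs Term.zero cs us ds } ∪
  { a | ∃ (i : ℕ) (cs us t ds : Term), 1 ≤ i ∧
        a = Atom.pqs (numeral i) cs us (Term.cons t ds) ∧
        (∀ j : ℕ, 1 ≤ j → j ≤ i → IsMember (numeral j) cs) ∧
        (DistinctList cs → CorrectUpTo i i cs us ds) }

/-- The specification `S = S_pq ∪ S_pqs` (for correctness). -/
def Spec : Set Atom := SpecPq ∪ SpecPqs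

/-- The specification `S⁰` (for completeness). -/
def Spec0 : Set Atom :=
  SpecPq ∪ { a | ∃ cs us ds : Term, a = Atom.pqs Term.zero cs us ds } ∪
  { a | ∃ (i : ℕ) (cs us t ds : Term), 1 ≤ i ∧
        a = Atom.pqs (numeral i) cs us (Term.cons t ds) ∧
        CorrectUpTo i i cs us ds }

/-- The size function on terms. -/
def tsize : Term → ℕ
  | Term.zero => 0
  | Term.nil => 0
  | Term.succ t => 1 + tsize t
  | Term.cons _ t => 1 + tsize t

/-- The level mapping on ground atoms. -/
def level : Atom → ℕ
  | Atom.pq _ cs _ _ => tsize cs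
  | Atom.pqs i cs _ _ => tsize i + tsize cs

lemma nth_pos {k : ℕ} {e t : Term} (h : NthMember k e t) : 1 ≤ k := by
  induction h with
  | head => exact le_refl 1
  | tail _ _ ih => omega

lemma nth_unique {k : ℕ} {e e' t : Term} (h : NthMember k e t)
    (h' : NthMember k e' t) : e = e' := by
  induction h with
  | head e t'' =>
    cases h' with
    | head => rfl
    | tail _ hk => exact absurd (nth_pos hk) (by omega)
  | tail e₁ hk ih =>
    cases h' with
    | head => exact absurd (nth_pos hk) (by omega)
    | tail _ hk' => exact ih hk'

lemma nth_cons_inv {k : ℕ} {e a t : Term} (h : NthMember (k+1) e (Term.cons a t))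
    (hk : 1 ≤ k) : NthMember k e t := by
  cases h with
  | head => omega
  | tail _ hk' => exact hk'

lemma nth_is_cons {k : ℕ} {e t : Term} (h : NthMember k e t) :
    ∃ a t', t = Term.cons a t' := by
  cases h with
  | head e t' => exact ⟨e, t', rfl⟩
  | tail e₁ _ => exact ⟨e₁, _, rfl⟩

lemma numeral_inj : ∀ {m n : ℕ}, numeral m = numeral n → m = n := by
  intro m
  induction m with
  | zero => intro n h; cases n with
    | zero => rfl
    | succ n => simp [numeral] at h
  | succ m ih => intro n h; cases n with
    | zero => simp [numeral] at h
    | succ n => simp only [numeral, Term.succ.injEq] at h; exact congrArg Nat.succ (ih h)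

lemma distinct_col {cs : Term} (hd : DistinctList cs) {k k' : ℕ} {e : Term}
    (h : NthMember k e cs) (h' : NthMember k' e cs) : k = k' := by
  by_contra hne
  exact hd.2 k k' e e h h' hne rfl

/-- Key step: extend correctness from `i` to `i+1` using the `pq` fact. -/
lemma correct_step (i : ℕ) (cs us ds' u t : Term) (k0 : ℕ)
    (h : CorrectUpTo i i cs (Term.cons u us) ds')
    (hc : NthMember k0 (numeral (i+1)) cs)
    (hu : NthMember k0 (numeral (i+1)) us)
    (hd : NthMember k0 (numeral (i+1)) (Term.cons t ds')) :
    CorrectUpTo (i+1) (i+1) cs us (Term.cons t ds') := by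
  obtain ⟨-, hdist, hmem, hup, hdn, hupr, hdnr⟩ := h
  have hk0 : 1 ≤ k0 := nth_pos hc
  -- any occurrence of numeral (i+1) in cs is at position k0
  have hnew : ∀ k : ℕ, NthMember k (numeral (i+1)) cs → k = k0 :=
    fun k hk => distinct_col hdist hk hc
  refine ⟨le_refl _, hdist, ?_, ?_, ?_, ?_, ?_⟩
  · intro j h1 h2
    rcases Nat.lt_or_ge j (i+1) with hj | hj
    · exact hmem j h1 (by omega)
    · have : j = i + 1 := by omega
      subst this
      exact ⟨k0, hk0, hc⟩
  · -- up-diagonal distinctness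
    intro j j' k k' h1 h2 h1' h2' hne hk hk'
    rcases Nat.lt_or_ge j (i+1) with hj | hj
    · rcases Nat.lt_or_ge j' (i+1) with hj' | hj'
      · intro heq
        exact hup j j' k k' h1 (by omega) h1' (by omega) hne hk hk' (by omega)
      · have : j' = i + 1 := by omega
        subst this
        have hk'0 : k0 = k' := (hnew k' hk').symm
        subst hk'0
        intro heq
        -- then the old up-diagonal of j is k0, positive
        have hl : ((k0 : ℤ)) = (k : ℤ) + j - i - 1 := by omega
        have hrec := hupr j k (k0 + 1) h1 (by omega) hk (by push_cast; omega) (by omega)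
        have := nth_cons_inv hrec hk0
        have := nth_unique this hu
        have := numeral_inj this
        omega
    · have : j = i + 1 := by omega
      subst this
      have hk0' : k0 = k := (hnew k hk).symm
      subst hk0'
      rcases Nat.lt_or_ge j' (i+1) with hj' | hj'
      · intro heq
        have hrec := hupr j' k' (k0 + 1) h1' (by omega) hk' (by push_cast; omega) (by omega)
        have := nth_cons_inv hrec hk0
        have := nth_unique this hu
        have := numeral_inj this
        omega
      · omega
  · -- down-diagonal distinctness
    intro j j' k k' h1 h2 h1' h2' hne hk hk'
    rcases Nat.lt_or_ge j (i+1) with hj | hj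
    · rcases Nat.lt_or_ge j' (i+1) with hj' | hj'
      · intro heq
        exact hdn j j' k k' h1 (by omega) h1' (by omega) hne hk hk' (by omega)
      · have : j' = i + 1 := by omega
        subst this
        have hk'0 : k0 = k' := (hnew k' hk').symm
        subst hk'0
        intro heq
        -- old down-diagonal of j is k0 - 1, positive
        have hkpos : 1 ≤ k := nth_pos hk
        have hrec := hdnr j k (k0 - 1) h1 (by omega) hk (by push_cast; omega) (by omega)
        have hds : NthMember (k0 - 1 + 1) (numeral j) (Term.cons t ds') :=
          NthMember.tail t hrec
        rw [show k0 - 1 + 1 = k0 by omega] at hds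
        have := nth_unique hds hd
        have := numeral_inj this
        omega
    · have : j = i + 1 := by omega
      subst this
      have hk0' : k0 = k := (hnew k hk).symm
      subst hk0'
      rcases Nat.lt_or_ge j' (i+1) with hj' | hj'
      · intro heq
        have hkpos : 1 ≤ k' := nth_pos hk'
        have hrec := hdnr j' k' (k0 - 1) h1' (by omega) hk' (by push_cast; omega) (by omega)
        have hds : NthMember (k0 - 1 + 1) (numeral j') (Term.cons t ds') :=
          NthMember.tail t hrec
        rw [show k0 - 1 + 1 = k0 by omega] at hds
        have := nth_unique hds hd
        have := numeral_inj this
        omega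
      · omega
  · -- positive up-diagonal numbers recorded in us
    intro j k l h1 h2 hk hl hlpos
    rcases Nat.lt_or_ge j (i+1) with hj | hj
    · have hrec := hupr j k (l + 1) h1 (by omega) hk (by push_cast; omega) (by omega)
      exact nth_cons_inv hrec (by omega)
    · have : j = i + 1 := by omega
      subst this
      have hk0' : k0 = k := (hnew k hk).symm
      subst hk0'
      have : l = k0 := by omega
      subst this
      exact hu
  · -- positive down-diagonal numbers recorded in cons t ds'
    intro j k l h1 h2 hk hl hlpos
    rcases Nat.lt_or_ge j (i+1) with hj | hj
    · have hkpos : 1 ≤ k := nth_pos hk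
      have hrec := hdnr j k (l - 1) h1 (by omega) hk (by push_cast; omega) (by omega)
      have hds : NthMember (l - 1 + 1) (numeral j) (Term.cons t ds') :=
        NthMember.tail t hrec
      rwa [show l - 1 + 1 = l by omega] at hds
    · have : j = i + 1 := by omega
      subst this
      have hk0' : k0 = k := (hnew k hk).symm
      subst hk0'
      have : l = k0 := by omega
      subst this
      exact hd

lemma correct_zero {cs us ds : Term} (hdist : DistinctList cs) :
    CorrectUpTo 0 0 cs us ds :=
  ⟨le_refl 0, hdist,
   fun j h1 h2 => absurd (h1.trans h2) (by omega),
   fun j j' k k' h1 h2 => absurd (h1.trans h2) (by omega),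
   fun j j' k k' h1 h2 => absurd (h1.trans h2) (by omega),
   fun j k l h1 h2 => absurd (h1.trans h2) (by omega),
   fun j k l h1 h2 => absurd (h1.trans h2) (by omega)⟩

lemma spec_is_model : IsModel NQUEENS Spec := by
  intro H B hcl hbody
  cases hcl with
  | c1 x y z =>
    exact Or.inr (Or.inl ⟨x, y, z, rfl⟩)
  | c3 i c u d =>
    exact Or.inl ⟨i, _, _, _, 1, le_refl 1, rfl,
      NthMember.head i c, NthMember.head i u, NthMember.head i d⟩
  | c4 i cs us ds c u d =>
    have hb : Atom.pq i cs us ds ∈ Spec := hbody _ (by simp)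
    rcases hb with hb | hb
    · obtain ⟨i', cs', us', ds', k, hk, heq, h1, h2, h3⟩ := hb
      obtain ⟨rfl, rfl, rfl, rfl⟩ : i = i' ∧ cs = cs' ∧ us = us' ∧ ds = ds' := by
        injection heq with a b c d; exact ⟨a, b, c, d⟩
      exact Or.inl ⟨i, _, _, _, k + 1, by omega, rfl,
        NthMember.tail c h1, NthMember.tail u h2, NthMember.tail d h3⟩
    · rcases hb with hb | hb
      · obtain ⟨_, _, _, h⟩ := hb; exact absurd h (by simp)
      · obtain ⟨_, _, _, _, _, _, h, _⟩ := hb; exact absurd h (by simp)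
  | c2 i cs us ds u d =>
    have hb1 : Atom.pqs i cs (Term.cons u us) ds ∈ Spec := hbody _ (by simp)
    have hb2 : Atom.pq (Term.succ i) cs us ds ∈ Spec := hbody _ (by simp)
    -- extract the pq fact
    have hpq : ∃ k : ℕ, 1 ≤ k ∧ NthMember k (Term.succ i) cs ∧
        NthMember k (Term.succ i) us ∧ NthMember k (Term.succ i) ds := by
      rcases hb2 with hb2 | hb2 | hb2
      · obtain ⟨i', cs', us', ds', k, hk, heq, h1, h2, h3⟩ := hb2
        obtain ⟨rfl, rfl, rfl, rfl⟩ : Term.succ i = i' ∧ cs = cs' ∧ us = us' ∧ ds = ds' := by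
          injection heq with a b c d; exact ⟨a, b, c, d⟩
        exact ⟨k, hk, h1, h2, h3⟩
      · obtain ⟨_, _, _, h⟩ := hb2; exact absurd h (by simp)
      · obtain ⟨_, _, _, _, _, _, h, _⟩ := hb2; exact absurd h (by simp)
    obtain ⟨k0, hk0, hc, hu, hd⟩ := hpq
    obtain ⟨a, ds', rfl⟩ := nth_is_cons hd
    -- the body pqs atom is in SpecPqs
    rcases hb1 with hb1 | hb1 | hb1
    · obtain ⟨_, _, _, _, _, _, heq, _⟩ := hb1; exact absurd heq (by simp)
    · -- i = zero case
      obtain ⟨cs', us', ds'', heq⟩ := hb1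
      obtain ⟨rfl, -, -, -⟩ :
          i = Term.zero ∧ cs = cs' ∧ Term.cons u us = us' ∧ Term.cons a ds' = ds'' := by
        injection heq with h1 h2 h3 h4; exact ⟨h1, h2, h3, h4⟩
      refine Or.inr (Or.inr ⟨1, cs, us, d, Term.cons a ds', le_refl 1, rfl, ?_, ?_⟩)
      · intro j h1 h2
        have : j = 1 := by omega
        subst this
        exact ⟨k0, hk0, hc⟩
      · intro hdist
        exact correct_step 0 cs us ds' u a k0 (correct_zero hdist) hc hu hd
    · -- i = numeral i₀, i₀ ≥ 1 case
      obtain ⟨i₀, cs', us', t, ds'', hi₀, heq, hmem, hcor⟩ := hb1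
      obtain ⟨rfl, rfl, husq, hdsq⟩ :
          i = numeral i₀ ∧ cs = cs' ∧ Term.cons u us = us' ∧
            Term.cons a ds' = Term.cons t ds'' := by
        injection heq with h1 h2 h3 h4; exact ⟨h1, h2, h3, h4⟩
      injection hdsq with hat hds2
      refine Or.inr (Or.inr ⟨i₀ + 1, cs, us, d, Term.cons a ds', by omega, rfl, ?_, ?_⟩)
      · intro j h1 h2
        rcases Nat.lt_or_ge j (i₀ + 1) with hj | hj
        · exact hmem j h1 (by omega)
        · have : j = i₀ + 1 := by omega
          subst this
          exact ⟨k0, hk0, hc⟩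
      · intro hdist
        have hcor' := hcor hdist
        rw [← husq, ← hds2] at hcor'
        exact correct_step i₀ cs us ds' u a k0 hcor' hc hu hd

/-- Correctness of NQUEENS: the least Herbrand model of
NQUEENS is contained in the specification `S = S_pq ∪ S_pqs`. -/
theorem nqueens_correct : LeastModel NQUEENS ⊆ Spec := by
  intro a ha
  exact ha Spec spec_is_model
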